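/- If the instance admits a schedule in which every machine has load at least T̆, then Santa-MILP(T̆) has an integral feasible solution, i.e., there exist z_{C,t} ∈ ℕ and x_{j,t} ∈ {0,1} satisfying constraints (1')–(4'). -/

import Mathlib

open Finset
open scoped Classical ENNReal

noncomputable section

variable {J : Type*} [Fintype J] {K : ℕ}

/-- The set `B_t` of big processing-time values occurring for machine type `t`. -/
def sBig (ε T : ℝ) (p : Fin K → J → ℝ) (t : Fin K) : Finset ℝ :=
  (Finset.univ.image (p t)).filter fun v => ε ^ 2 * T < v

/-- The set `S_t` of small processing-time values occurring for machine type `t`. -/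
def sSmall (ε T : ℝ) (p : Fin K → J → ℝ) (t : Fin K) : Finset ℝ :=
  (Finset.univ.image (p t)).filter fun v => v ≤ ε ^ 2 * T

/-- The size of a configuration `C` for machine type `t`. -/
def sSize (ε T : ℝ) (p : Fin K → J → ℝ) (t : Fin K) (C : ℝ → ℕ) : ℝ :=
  ∑ v ∈ sBig ε T p t, (C v : ℝ) * v

/-- `P = ⌊T̆⌋ + max_t max B_t` (big values are positive integers, so taking `⌈v⌉₊`
is harmless and allows a `Finset.sup` over `ℕ`). -/
def sP (ε T Tb : ℝ) (p : Fin K → J → ℝ) : ℝ :=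
  (⌊Tb⌋₊ : ℝ) +
    ((((Finset.univ : Finset (Fin K)).biUnion fun t => sBig ε T p t).sup fun v => ⌈v⌉₊ : ℕ) : ℝ)

/-- `C` is a configuration for machine type `t`: supported on `B_t`, of size at most `P`. -/
def sIsConf (ε T Tb : ℝ) (p : Fin K → J → ℝ) (t : Fin K) (C : ℝ → ℕ) : Prop :=
  (∀ v ∉ sBig ε T p t, C v = 0) ∧ sSize ε T p t C ≤ sP ε T Tb p

/-- Feasibility of the Santa Claus MILP(T̆): constraints (1')-(4') of the paper.
A configuration is big if its size exceeds `⌊T̆⌋` and small otherwise. -/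
def SantaFeasible (ε T Tb : ℝ) (p : Fin K → J → ℝ) (m : Fin K → ℕ)
    (z : (ℝ → ℕ) → Fin K → ℝ≥0∞) (x : J → Fin K → ℝ≥0∞) : Prop :=
  (∀ C t, ¬ sIsConf ε T Tb p t C → z C t = 0) ∧
  (∀ t, ∑' C : ℝ → ℕ, z C t = m t) ∧
  (∀ j, ∑ t, x j t = 1) ∧
  (∀ t, ∀ v ∈ sBig ε T p t,
    (∑' C : ℝ → ℕ, (C v : ℝ≥0∞) * z C t) ≤
      ∑ j ∈ Finset.univ.filter (fun j => p t j = v), x j t) ∧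
  (∀ t,
    ((m t : ℝ≥0∞) -
        ∑' C : ℝ → ℕ, (if (⌊Tb⌋₊ : ℝ) < sSize ε T p t C then z C t else 0)) *
        ENNReal.ofReal Tb ≤
      (∑' C : ℝ → ℕ,
        (if sSize ε T p t C ≤ (⌊Tb⌋₊ : ℝ) then ENNReal.ofReal (sSize ε T p t C) * z C t
          else 0)) +
      ∑ v ∈ sSmall ε T p t,
        ENNReal.ofReal v * ∑ j ∈ Finset.univ.filter (fun j => p t j = v), x j t)

/-- The machines: `m t` machines of each type `t`. -/
def Machine (m : Fin K → ℕ) : Type := Σ t : Fin K, Fin (m t)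

/-- The load of machine `i` under schedule `σ`. -/
def load (p : Fin K → J → ℝ) (m : Fin K → ℕ) (σ : J → Machine m) (i : Machine m) : ℝ :=
  ∑ j ∈ Finset.univ.filter (fun j => σ j = i), p i.1 j

/-!
Machine `i` of type `t` contributes the configuration counting its big jobs by processing
time, and `x_{j,t} = 1` iff job `j` runs on a machine of type `t`. Such a configuration may
exceed `P`; dropping big jobs one at a time lowers its size by at most `max_t max B_t` per step,
so it can be cut down to size at most `P` while staying above `⌊T̆⌋`, i.e. big. A machine whose
configuration ends up small was therefore never truncated, and its load `≥ T̆` is the size of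
that configuration plus its small jobs, which is what constraint (4') counts.
-/

namespace Finset

theorem exists_subset_sum_le_and_eq_or_lt {ι α : Type*} [AddCommMonoid α] [LinearOrder α]
    [IsOrderedAddMonoid α] {s : Finset ι} {f : ι → α} {L U : α} (hU : 0 ≤ U)
    (hf : ∀ i ∈ s, L + f i ≤ U) :
    ∃ t ⊆ s, ∑ i ∈ t, f i ≤ U ∧ (t = s ∨ L < ∑ i ∈ t, f i) := by
  induction s using Finset.induction_on with
  | empty => exact ⟨∅, subset_rfl, by simpa using hU, Or.inl rfl⟩
  | insert a s ha ih =>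
    obtain ⟨t, hts, htU, ht⟩ := ih fun i hi => hf i (mem_insert_of_mem hi)
    by_cases hLt : L < ∑ i ∈ t, f i
    · exact ⟨t, hts.trans (subset_insert a s), htU, Or.inr hLt⟩
    obtain rfl := ht.resolve_right hLt
    refine ⟨insert a t, subset_rfl, ?_, Or.inl rfl⟩
    calc ∑ i ∈ insert a t, f i = f a + ∑ i ∈ t, f i := sum_insert ha
      _ ≤ f a + L := by gcongr; exact not_lt.mp hLt
      _ = L + f a := add_comm _ _
      _ ≤ U := hf a (mem_insert_self a t)

theorem sum_ite_fst_eq_sum_sum {ι α β : Type*} {κ : α → Type*} [DecidableEq α]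
    [∀ a, Fintype (κ a)] [AddCommMonoid β] (σ : ι → Σ a, κ a) (a : α) (s : Finset ι) (f : ι → β) :
    ∑ j ∈ s, (if (σ j).1 = a then f j else 0) = ∑ k, ∑ j ∈ s with σ j = ⟨a, k⟩, f j := by
  simp_rw [sum_filter]
  rw [sum_comm]
  refine sum_congr rfl fun j _ => ?_
  obtain ⟨b, k⟩ := σ j
  by_cases hb : b = a
  · subst hb
    simp
  · simp [hb]

end Finset

theorem ENNReal.tsum_mul_card_fiber {ι α : Type*} [Fintype ι] (g : ι → α) (f : α → ℝ≥0∞) :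
    ∑' a, f a * #{i | g i = a} = ∑ i, f (g i) := by
  rw [tsum_eq_sum (s := univ.image g), sum_comp]
  · simp only [nsmul_eq_mul, mul_comm]
  · intro a ha
    simp only [mem_image, mem_univ, true_and, not_exists] at ha
    simp [filter_eq_empty_iff.2 fun i _ => ha i]

section SantaClaus

def jobConf (q : J → ℝ) (A : Finset J) : ℝ → ℕ := fun v => #{j ∈ A | q j = v}

variable {ε T Tb : ℝ} {p : Fin K → J → ℝ}

theorem sSize_jobConf {t : Fin K} {A : Finset J} (hA : ∀ j ∈ A, ε ^ 2 * T < p t j) :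
    sSize ε T p t (jobConf (p t) A) = ∑ j ∈ A, p t j := by
  rw [sSize, ← sum_fiberwise_of_maps_to (g := p t) (t := sBig ε T p t)
    fun j hj => by simp [sBig, hA j hj]]
  refine sum_congr rfl fun v _ => ?_
  rw [jobConf, sum_congr rfl fun j hj => (mem_filter.1 hj).2, sum_const, nsmul_eq_mul]

theorem floor_add_le_sP {t : Fin K} {j : J} (hj : ε ^ 2 * T < p t j) :
    ⌊Tb⌋₊ + p t j ≤ sP ε T Tb p := by
  unfold sP
  gcongr
  calc p t j ≤ ⌈p t j⌉₊ := Nat.le_ceil _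
    _ ≤ _ := Nat.cast_le.2 <| le_sup <| mem_biUnion.2 ⟨t, mem_univ t, by simp [sBig, hj]⟩

theorem sP_nonneg : 0 ≤ sP ε T Tb p := by
  unfold sP
  positivity

theorem sIsConf_jobConf {t : Fin K} {A : Finset J} (hA : ∀ j ∈ A, ε ^ 2 * T < p t j)
    (hAP : ∑ j ∈ A, p t j ≤ sP ε T Tb p) : sIsConf ε T Tb p t (jobConf (p t) A) := by
  refine ⟨fun v hv => card_eq_zero.2 <| filter_eq_empty_iff.2 fun j hj hjv => hv ?_, ?_⟩
  · simp [sBig, ← hjv, hA j hj]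
  · rwa [sSize_jobConf hA]

variable {m : Fin K → ℕ} (σ : J → Machine m)

variable (ε T p) in
def bigJobs (i : Machine m) : Finset J := {j | σ j = i ∧ ε ^ 2 * T < p i.1 j}

variable (ε T p) in
def smallJobs (i : Machine m) : Finset J := {j | σ j = i ∧ p i.1 j ≤ ε ^ 2 * T}

theorem load_eq_sum_bigJobs_add_sum_smallJobs (i : Machine m) :
    load p m σ i = ∑ j ∈ bigJobs ε T p σ i, p i.1 j + ∑ j ∈ smallJobs ε T p σ i, p i.1 j := by
  rw [load, ← sum_filter_add_sum_filter_not _ fun j => ε ^ 2 * T < p i.1 j]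
  simp only [bigJobs, smallJobs, filter_filter, not_lt]

variable (p) in
/-- `z_{C,t}`: the number of machines of type `t` whose (truncated) big-job set `A i` has
configuration `C`. -/
def confCount (A : Machine m → Finset J) (C : ℝ → ℕ) (t : Fin K) : ℝ≥0∞ :=
  #{k : Fin (m t) | jobConf (p t) (A ⟨t, k⟩) = C}

def typeIndicator (j : J) (t : Fin K) : ℝ≥0∞ := if (σ j).1 = t then 1 else 0

variable {σ}

theorem tsum_mul_confCount_le {A : Machine m → Finset J} (hA : ∀ i, A i ⊆ bigJobs ε T p σ i)
    (t : Fin K) (v : ℝ) :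
    ∑' C : ℝ → ℕ, (C v : ℝ≥0∞) * confCount p A C t ≤
      ∑ j ∈ univ.filter (fun j => p t j = v), typeIndicator σ j t := by
  simp only [confCount, typeIndicator]
  rw [ENNReal.tsum_mul_card_fiber]
  refine le_of_le_of_eq ?_ (sum_ite_fst_eq_sum_sum σ t _ fun _ => (1 : ℝ≥0∞)).symm
  gcongr with k
  rw [sum_const, nsmul_one, jobConf]
  exact_mod_cast card_le_card fun j hj => by
    have := hA _ (mem_filter.1 hj).1
    simp_all [bigJobs]

theorem sum_sSmall_mul_sum_typeIndicator (t : Fin K) :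
    ∑ v ∈ sSmall ε T p t, ENNReal.ofReal v *
        ∑ j ∈ univ.filter (fun j => p t j = v), typeIndicator σ j t =
      ∑ k, ∑ j ∈ smallJobs ε T p σ ⟨t, k⟩, ENNReal.ofReal (p t j) := by
  calc _ = ∑ v ∈ sSmall ε T p t, ∑ j with p t j = v,
        ENNReal.ofReal (p t j) * typeIndicator σ j t := by
        refine sum_congr rfl fun v _ => ?_
        rw [mul_sum]
        exact sum_congr rfl fun j hj => by rw [(mem_filter.1 hj).2]
    _ = ∑ j with p t j ≤ ε ^ 2 * T, if (σ j).1 = t then ENNReal.ofReal (p t j) else 0 := by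
        rw [sum_fiberwise_eq_sum_filter]
        refine sum_congr (filter_congr fun j _ => by simp [sSmall]) fun j _ => ?_
        simp [typeIndicator]
    _ = _ := by
        refine (sum_ite_fst_eq_sum_sum σ t _ fun j => ENNReal.ofReal (p t j)).trans ?_
        refine sum_congr rfl fun k _ => sum_congr ?_ fun _ _ => rfl
        ext j
        simp only [smallJobs, mem_filter, mem_univ, true_and, and_comm]
        -- the two equations live in `Machine m` and in the sigma type it unfolds to
        rfl

/-- A small configuration was not truncated, so it carries all big jobs of the machine. -/
theorem ofReal_le_sSize_add_sum_smallJobs {i : Machine m} {A : Finset J}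
    (hσ : Tb ≤ load p m σ i) (hA : A ⊆ bigJobs ε T p σ i)
    (hAfull : A = bigJobs ε T p σ i ∨ ⌊Tb⌋₊ < ∑ j ∈ A, p i.1 j)
    (hsmall : sSize ε T p i.1 (jobConf (p i.1) A) ≤ ⌊Tb⌋₊) :
    ENNReal.ofReal Tb ≤ ENNReal.ofReal (sSize ε T p i.1 (jobConf (p i.1) A)) +
      ∑ j ∈ smallJobs ε T p σ i, ENNReal.ofReal (p i.1 j) := by
  rw [sSize_jobConf fun j hj => (mem_filter.1 (hA hj)).2.2] at hsmall ⊢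
  obtain rfl := hAfull.resolve_right hsmall.not_gt
  rw [load_eq_sum_bigJobs_add_sum_smallJobs] at hσ
  calc ENNReal.ofReal Tb ≤ ENNReal.ofReal (∑ j ∈ bigJobs ε T p σ i, p i.1 j +
        ∑ j ∈ smallJobs ε T p σ i, p i.1 j) := ENNReal.ofReal_le_ofReal hσ
    _ ≤ _ := ENNReal.ofReal_add_le.trans <| by
        gcongr
        exact le_sum_of_subadditive _ ENNReal.ofReal_zero.le
          (fun _ _ => ENNReal.ofReal_add_le) _ _

variable {A : Machine m → Finset J}

theorem load_constraint_confCount (hσ : ∀ i, Tb ≤ load p m σ i)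
    (hA : ∀ i, A i ⊆ bigJobs ε T p σ i)
    (hAfull : ∀ i, A i = bigJobs ε T p σ i ∨ ⌊Tb⌋₊ < ∑ j ∈ A i, p i.1 j) (t : Fin K) :
    ((m t : ℝ≥0∞) -
        ∑' C : ℝ → ℕ, (if (⌊Tb⌋₊ : ℝ) < sSize ε T p t C then confCount p A C t else 0)) *
        ENNReal.ofReal Tb ≤
      (∑' C : ℝ → ℕ,
        (if sSize ε T p t C ≤ (⌊Tb⌋₊ : ℝ) then
          ENNReal.ofReal (sSize ε T p t C) * confCount p A C t else 0)) +
      ∑ v ∈ sSmall ε T p t,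
        ENNReal.ofReal v * ∑ j ∈ Finset.univ.filter (fun j => p t j = v), typeIndicator σ j t := by
  set s : Fin (m t) → ℝ := fun k => sSize ε T p t (jobConf (p t) (A ⟨t, k⟩))
  have hbig : ∑' C : ℝ → ℕ, (if (⌊Tb⌋₊ : ℝ) < sSize ε T p t C then confCount p A C t else 0) =
      ∑ k, if (⌊Tb⌋₊ : ℝ) < s k then 1 else 0 := by
    refine (tsum_congr fun C => ?_).trans (ENNReal.tsum_mul_card_fiber
      (fun k => jobConf (p t) (A ⟨t, k⟩)) fun C => if (⌊Tb⌋₊ : ℝ) < sSize ε T p t C then 1 else 0)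
    exact (boole_mul _ _).symm
  have hsmall : ∑' C : ℝ → ℕ, (if sSize ε T p t C ≤ (⌊Tb⌋₊ : ℝ) then
        ENNReal.ofReal (sSize ε T p t C) * confCount p A C t else 0) =
      ∑ k, if s k ≤ ⌊Tb⌋₊ then ENNReal.ofReal (s k) else 0 := by
    refine (tsum_congr fun C => ?_).trans (ENNReal.tsum_mul_card_fiber
      (fun k => jobConf (p t) (A ⟨t, k⟩)) fun C =>
        if sSize ε T p t C ≤ ⌊Tb⌋₊ then ENNReal.ofReal (sSize ε T p t C) else 0)
    exact (ite_zero_mul ..).symm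
  rw [hbig, hsmall, sum_sSmall_mul_sum_typeIndicator, ← sum_add_distrib]
  calc _ ≤ (∑ k, if s k ≤ ⌊Tb⌋₊ then (1 : ℝ≥0∞) else 0) * ENNReal.ofReal Tb := by
        gcongr
        rw [tsub_le_iff_left, ← sum_add_distrib]
        calc (m t : ℝ≥0∞) = ∑ _k : Fin (m t), 1 := by simp
          _ ≤ _ := sum_le_sum fun k _ => by split_ifs <;> simp_all
    _ = ∑ k, if s k ≤ ⌊Tb⌋₊ then ENNReal.ofReal Tb else 0 := by
        simp_rw [sum_mul, boole_mul]
    _ ≤ _ := sum_le_sum fun k _ => by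
        split_ifs with h
        · exact ofReal_le_sSize_add_sum_smallJobs (i := ⟨t, k⟩) (hσ _) (hA _) (hAfull _) h
        · exact zero_le

theorem santaFeasible_confCount (hσ : ∀ i, Tb ≤ load p m σ i)
    (hA : ∀ i, A i ⊆ bigJobs ε T p σ i) (hAP : ∀ i, ∑ j ∈ A i, p i.1 j ≤ sP ε T Tb p)
    (hAfull : ∀ i, A i = bigJobs ε T p σ i ∨ ⌊Tb⌋₊ < ∑ j ∈ A i, p i.1 j) :
    SantaFeasible ε T Tb p m (confCount p A) (typeIndicator σ) := by
  have hconf (t : Fin K) (k : Fin (m t)) : sIsConf ε T Tb p t (jobConf (p t) (A ⟨t, k⟩)) :=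
    sIsConf_jobConf (fun j hj => (mem_filter.1 (hA _ hj)).2.2) (hAP _)
  refine ⟨fun C t hC => ?_, fun t => ?_, fun j => ?_, fun t v _ => tsum_mul_confCount_le hA t v,
    load_constraint_confCount hσ hA hAfull⟩
  · simp only [confCount, Nat.cast_eq_zero, card_eq_zero, filter_eq_empty_iff]
    exact fun k _ hk => hC (hk ▸ hconf t k)
  · simpa [confCount] using
      ENNReal.tsum_mul_card_fiber (fun k : Fin (m t) => jobConf (p t) (A ⟨t, k⟩)) 1
  · simp [typeIndicator]

end SantaClaus

theorem schedule_to_santa_MILP_general (ε T Tb : ℝ)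
    (p : Fin K → J → ℝ)
    (m : Fin K → ℕ)
    (hsched : ∃ σ : J → Machine m, ∀ i, Tb ≤ load p m σ i) :
    ∃ z x, SantaFeasible ε T Tb p m z x ∧
      (∀ C t, ∃ n : ℕ, z C t = n) ∧
      (∀ j t, x j t = 0 ∨ x j t = 1) := by
  obtain ⟨σ, hσ⟩ := hsched
  choose A hA hAP hAfull using fun i : Machine m =>
    exists_subset_sum_le_and_eq_or_lt (s := bigJobs ε T p σ i) (L := (⌊Tb⌋₊ : ℝ)) sP_nonneg
      fun j hj => floor_add_le_sP (mem_filter.1 hj).2.2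
  refine ⟨confCount p A, typeIndicator σ, santaFeasible_confCount hσ hA hAP hAfull,
    fun C t => ⟨_, rfl⟩, fun j t => ?_⟩
  unfold typeIndicator
  split_ifs <;> simp

/-- A schedule in which every machine has load at least `T̆` yields an
integral feasible solution of the Santa Claus MILP(T̆). -/
theorem schedule_to_santa_MILP (ε T Tb : ℝ) (hε : 0 < ε) (hε1 : ε ≤ 1) (hT : 0 < T)
    (hTb : 0 < Tb) (hTbT : Tb ≤ T)
    (p : Fin K → J → ℝ) (hp : ∀ t j, 0 ≤ p t j ∧ p t j ≤ T)
    (hbigint : ∀ t j, ε ^ 2 * T < p t j → ∃ n : ℕ, 0 < n ∧ p t j = n)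
    (m : Fin K → ℕ)
    (hsched : ∃ σ : J → Machine m, ∀ i, Tb ≤ load p m σ i) :
    ∃ z x, SantaFeasible ε T Tb p m z x ∧
      (∀ C t, ∃ n : ℕ, z C t = n) ∧
      (∀ j t, x j t = 0 ∨ x j t = 1) :=
  schedule_to_santa_MILP_general ε T Tb p m hsched
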